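/- (q-Euler α,β lemma.) Let A_q(t) = Σ_{n≥0} E_{n,q} t^n/[n]_q! (so that A_q(t)·(e_q(t)+1) = 2), and define (α_n), (β_n) by t·(D_q A_q)(t) = (Σ α_n t^n/[n]_q!)·A_q(qt) and A_q(t) = (Σ β_n t^n/[n]_q!)·A_q(qt) in K[[t]]. Then α_0 = 0 and α_n = −([n]_q/2) Σ_{j=0}^{n−1} [n−1 choose j]_q E_{j,q} for all n ≥ 1; in particular α_1 = −1/2 and α_n = ([n]_q/2) E_{n−1,q} for n ≥ 2. Moreover β_0 = 1 and β_n = −(q−1) α_n for all n ≥ 1; in particular β_1 = (q−1)/2 and β_n = −((q−1)[n]_q/2) E_{n−1,q} for n ≥ 2. -/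

import Mathlib

noncomputable section

open Finset MvPolynomial

/-- The `q`-integer `[n]_q = 1 + q + ⋯ + q^(n-1)`. -/
def qInt {K : Type*} [Field K] (q : K) (n : ℕ) : K := ∑ i ∈ Finset.range n, q ^ i

/-- The `q`-factorial `[n]_q! = [1]_q [2]_q ⋯ [n]_q`. -/
def qFact {K : Type*} [Field K] (q : K) (n : ℕ) : K := ∏ k ∈ Finset.range n, qInt q (k + 1)

/-- The `q`-binomial coefficient `[n choose k]_q`. -/
def qChoose {K : Type*} [Field K] (q : K) (n k : ℕ) : K :=
  qFact q n / (qFact q k * qFact q (n - k))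

/-- The partial `q`-derivative in the variable `v` (v = 0 is `x`, v = 1 is `y`),
the linear operator determined by `D_{q,x}(x^m y^l) = [m]_q x^(m-1) y^l` and
`D_{q,y}(x^m y^l) = [l]_q x^m y^(l-1)`. -/
def qDeriv {K : Type*} [Field K] (q : K) (v : Fin 2) (P : MvPolynomial (Fin 2) K) :
    MvPolynomial (Fin 2) K :=
  ∑ m ∈ P.support, monomial (m - Finsupp.single v 1) (P.coeff m * qInt q (m v))

/-- Substitution `x ↦ c·x` in a polynomial in the two variables `x = X 0`, `y = X 1`. -/
def substX {K : Type*} [Field K] (c : K) (P : MvPolynomial (Fin 2) K) :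
    MvPolynomial (Fin 2) K :=
  aeval (fun i : Fin 2 => if i = 0 then C c * X 0 else X 1) P

/-- Substitution `y ↦ c·y` in a polynomial in the two variables `x = X 0`, `y = X 1`. -/
def substY {K : Type*} [Field K] (c : K) (P : MvPolynomial (Fin 2) K) :
    MvPolynomial (Fin 2) K :=
  aeval (fun i : Fin 2 => if i = 0 then X 0 else C c * X 1) P

/-- The 2D `q`-Appell polynomials attached to a coefficient sequence `a`:
`A_{n,q}(x,y) = Σ_{i+j+k=n} ([n]_q!/([i]_q![j]_q![k]_q!)) a_i q^(k(k-1)/2) x^j y^k`. -/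
def appell {K : Type*} [Field K] (q : K) (a : ℕ → K) (n : ℕ) : MvPolynomial (Fin 2) K :=
  ∑ i ∈ Finset.range (n + 1), ∑ j ∈ Finset.range (n + 1 - i),
    monomial (Finsupp.single (0 : Fin 2) j + Finsupp.single (1 : Fin 2) (n - i - j))
      (qFact q n / (qFact q i * qFact q j * qFact q (n - i - j)) * a i *
        q ^ ((n - i - j) * (n - i - j - 1) / 2))

/-! Write `θ = t·D_q` (`qTheta`), so that `θ(tⁿ) = [n]_q tⁿ`, and `A(t) = Σ E_n tⁿ/[n]_q!`.
Since `[i + j]_q = [i]_q q^j + [j]_q`, `θ` obeys the `q`-Leibniz rule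
`θ(fg) = θf · g(qt) + f · θg` (where `g(qt)` is `rescale q g`), and `θ e_q = t e_q`. Applying `θ`
to `A · (e_q + 1) = 2` and substituting `θA = α · A(qt)` gives `2α = -t e_q A`, whose coefficients
are the stated `q`-binomial sums. Finally `A - A(qt) = (1 - q) θA`, so
`β · A(qt) = (1 + (1 - q) α) · A(qt)`, and `A(qt)` is invertible. -/

section

variable {K : Type*} [Field K] (q : K)

lemma qInt_add (a b : ℕ) : qInt q (a + b) = qInt q a + q ^ a * qInt q b := by
  simp only [qInt, sum_range_add, pow_add, mul_sum]

lemma sub_one_mul_qInt (n : ℕ) : (q - 1) * qInt q n = q ^ n - 1 := by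
  rw [qInt, mul_comm, geom_sum_mul]

lemma qFact_succ (n : ℕ) : qFact q (n + 1) = qFact q n * qInt q (n + 1) :=
  prod_range_succ _ _

lemma qFact_ne_zero (hq : ∀ n : ℕ, 1 ≤ n → qInt q n ≠ 0) (n : ℕ) : qFact q n ≠ 0 :=
  prod_ne_zero_iff.mpr fun k _ => hq (k + 1) (by omega)

end

namespace PowerSeries

variable {K : Type*} [Field K] (q : K)

def qTheta : K⟦X⟧ →ₗ[K] K⟦X⟧ where
  toFun f := mk fun n => qInt q n * coeff n f
  map_add' f g := by ext n; simp [mul_add]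
  map_smul' c f := by ext n; simp only [coeff_mk, map_smul, smul_eq_mul, RingHom.id_apply]; ring

@[simp]
lemma coeff_qTheta (f : K⟦X⟧) (n : ℕ) : coeff n (qTheta q f) = qInt q n * coeff n f := by
  simp [qTheta]

lemma qTheta_C (c : K) : qTheta q (C c) = 0 := by
  ext n
  rcases n with _ | n <;> simp [coeff_C, qInt]

lemma qTheta_one : qTheta q (1 : K⟦X⟧) = 0 := by
  simpa using qTheta_C q 1

lemma qTheta_mul (f g : K⟦X⟧) :
    qTheta q (f * g) = qTheta q f * rescale q g + f * qTheta q g := by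
  ext n
  simp only [coeff_qTheta, map_add, coeff_mul, coeff_rescale, mul_sum,
    ← Finset.sum_add_distrib]
  refine Finset.sum_congr rfl fun p hp => ?_
  rw [← HasAntidiagonal.mem_antidiagonal.mp hp, add_comm, qInt_add]
  ring

lemma sub_rescale_eq_C_mul_qTheta (f : K⟦X⟧) : f - rescale q f = C (1 - q) * qTheta q f := by
  ext n
  rw [map_sub, coeff_rescale, coeff_C_mul, coeff_qTheta]
  linear_combination coeff n f * sub_one_mul_qInt q n

def qEGF (a : ℕ → K) : K⟦X⟧ := mk fun n => a n / qFact q n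

def qExp : K⟦X⟧ := qEGF q fun _ => 1

@[simp]
lemma coeff_qEGF (a : ℕ → K) (n : ℕ) : coeff n (qEGF q a) = a n / qFact q n :=
  coeff_mk _ _

@[simp]
lemma constantCoeff_qEGF (a : ℕ → K) : constantCoeff (qEGF q a) = a 0 := by
  simp [← coeff_zero_eq_constantCoeff_apply, qFact]

lemma rescale_qEGF (a : ℕ → K) : rescale q (qEGF q a) = qEGF q fun n => a n * q ^ n := by
  ext n
  simp only [coeff_rescale, coeff_qEGF]
  ring

variable {q}

lemma qEGF_mul (hq : ∀ n : ℕ, 1 ≤ n → qInt q n ≠ 0) (a b : ℕ → K) :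
    qEGF q a * qEGF q b =
      qEGF q fun n => ∑ k ∈ range (n + 1), qChoose q n k * a k * b (n - k) := by
  ext n
  rw [coeff_mul, Finset.Nat.sum_antidiagonal_eq_sum_range_succ_mk, coeff_qEGF, Finset.sum_div]
  refine Finset.sum_congr rfl fun k _ => ?_
  have := qFact_ne_zero q hq k
  have := qFact_ne_zero q hq (n - k)
  have := qFact_ne_zero q hq n
  simp only [coeff_qEGF, qChoose]
  field_simp

lemma qEGF_mul_qExp (hq : ∀ n : ℕ, 1 ≤ n → qInt q n ≠ 0) (a : ℕ → K) :
    qEGF q a * qExp q = qEGF q fun n => ∑ k ∈ range (n + 1), qChoose q n k * a k := by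
  simp only [qExp, qEGF_mul hq, mul_one]

lemma qTheta_qEGF (hq : ∀ n : ℕ, 1 ≤ n → qInt q n ≠ 0) (a : ℕ → K) :
    qTheta q (qEGF q a) = X * qEGF q fun n => a (n + 1) := by
  ext n
  rcases n with _ | n
  · simp [qInt]
  · have := qFact_ne_zero q hq n
    have := hq (n + 1) (by omega)
    rw [coeff_qTheta, coeff_succ_X_mul, coeff_qEGF, coeff_qEGF, qFact_succ]
    field_simp

lemma qTheta_qExp (hq : ∀ n : ℕ, 1 ≤ n → qInt q n ≠ 0) : qTheta q (qExp q) = X * qExp q :=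
  qTheta_qEGF hq _

lemma X_mul_qEGF_succ (a : ℕ → K) :
    X * qEGF q (fun n => a (n + 1)) = mk fun n => if n = 0 then 0 else a n / qFact q (n - 1) := by
  ext n
  rcases n with _ | n <;> simp

lemma qEGF_mul_qExp_add_one_eq_C_two (hq : ∀ n : ℕ, 1 ≤ n → qInt q n ≠ 0) {E : ℕ → K}
    (hE0 : E 0 = 1)
    (hE : ∀ n : ℕ, 1 ≤ n → E n + ∑ k ∈ range (n + 1), qChoose q n k * E k = 0) :
    qEGF q E * (qExp q + 1) = C 2 := by
  rw [mul_add, mul_one, qEGF_mul_qExp hq]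
  ext n
  rw [map_add, coeff_qEGF, coeff_qEGF, coeff_C, ← add_div]
  rcases n with _ | n
  · simp [hE0, qChoose, qFact]
    norm_num
  · rw [if_neg n.succ_ne_zero, add_comm, hE (n + 1) (by omega), zero_div]

lemma C_mul_eq_neg_X_mul_of_qTheta (hq : ∀ n : ℕ, 1 ≤ n → qInt q n ≠ 0) {A α : K⟦X⟧} {c : K}
    (hA : A * (qExp q + 1) = C c) (hα : qTheta q A = α * rescale q A) :
    C c * α = -(X * (A * qExp q)) := by
  have h := congrArg (qTheta q) hA
  have hRc : rescale q (C c) = C c := by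
    ext n
    rcases n with _ | n <;> simp [coeff_C]
  rw [qTheta_mul, hα, LinearMap.map_add, qTheta_qExp hq, qTheta_one, qTheta_C, mul_assoc,
    ← map_mul, hA, hRc] at h
  linear_combination h

lemma eq_one_add_C_mul_of_qTheta {A α β : K⟦X⟧} (hA : constantCoeff A ≠ 0)
    (hα : qTheta q A = α * rescale q A) (hβ : A = β * rescale q A) :
    β = 1 + C (1 - q) * α := by
  have hRA : rescale q A ≠ 0 := fun h => hA (by simpa using congrArg (coeff 0) h)
  apply mul_right_cancel₀ hRA
  rw [← hβ, add_mul, one_mul, mul_assoc, ← hα, ← sub_rescale_eq_C_mul_qTheta]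
  ring

lemma eq_of_C_mul_qEGF_eq_neg_X_mul (hq : ∀ n : ℕ, 1 ≤ n → qInt q n ≠ 0) {a b : ℕ → K} {c : K}
    (hc : c ≠ 0) (h : C c * qEGF q a = -(X * qEGF q b)) :
    a 0 = 0 ∧ ∀ n, a (n + 1) = -(qInt q (n + 1) / c) * b n := by
  refine ⟨by simpa [hc, qFact] using congrArg (coeff 0) h, fun n => ?_⟩
  have h' := congrArg (coeff (n + 1)) h
  rw [coeff_C_mul, map_neg, coeff_succ_X_mul, coeff_qEGF, coeff_qEGF, qFact_succ] at h'
  have := qFact_ne_zero q hq n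
  have := hq (n + 1) (by omega)
  field_simp at h' ⊢
  linear_combination h'

lemma eq_of_qEGF_eq_one_add_C_mul (hq : ∀ n : ℕ, 1 ≤ n → qInt q n ≠ 0) {a b : ℕ → K} {c : K}
    (h : qEGF q b = 1 + C c * qEGF q a) : b 0 = 1 + c * a 0 ∧ ∀ n, b (n + 1) = c * a (n + 1) := by
  refine ⟨by simpa [qFact] using congrArg (coeff 0) h, fun n => ?_⟩
  have h' := congrArg (coeff (n + 1)) h
  rw [map_add, coeff_one, if_neg n.succ_ne_zero, zero_add, coeff_C_mul, coeff_qEGF,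
    coeff_qEGF] at h'
  have := qFact_ne_zero q hq (n + 1)
  field_simp at h'
  exact h'

theorem qEuler_coeff_alpha_beta (h2 : (2 : K) ≠ 0) (hq : ∀ n : ℕ, 1 ≤ n → qInt q n ≠ 0)
    {E α β : ℕ → K} (hE0 : E 0 = 1)
    (hE : ∀ n : ℕ, 1 ≤ n → E n + ∑ k ∈ range (n + 1), qChoose q n k * E k = 0)
    (hα : qTheta q (qEGF q E) = qEGF q α * rescale q (qEGF q E))
    (hβ : qEGF q E = qEGF q β * rescale q (qEGF q E)) :
    α 0 = 0 ∧ (∀ n, α (n + 1) = -(qInt q (n + 1) / 2) * ∑ k ∈ range (n + 1), qChoose q n k * E k) ∧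
      β 0 = 1 ∧ ∀ n, β (n + 1) = (1 - q) * α (n + 1) := by
  have hαser := C_mul_eq_neg_X_mul_of_qTheta hq (qEGF_mul_qExp_add_one_eq_C_two hq hE0 hE) hα
  rw [qEGF_mul_qExp hq] at hαser
  obtain ⟨hα0, hαsucc⟩ := eq_of_C_mul_qEGF_eq_neg_X_mul hq h2 hαser
  obtain ⟨hβ0, hβsucc⟩ := eq_of_qEGF_eq_one_add_C_mul hq
    (eq_one_add_C_mul_of_qTheta (by simp [hE0]) hα hβ)
  exact ⟨hα0, hαsucc, by simpa [hα0] using hβ0, hβsucc⟩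

end PowerSeries

theorem qEuler_alpha_beta_general
    {K : Type*} [Field K] [CharZero K] (q : K)
    (hq : ∀ n : ℕ, 1 ≤ n → qInt q n ≠ 0)
    (E : ℕ → K) (hE0 : E 0 = 1)
    (hE : ∀ n : ℕ, 1 ≤ n → E n + ∑ k ∈ Finset.range (n + 1), qChoose q n k * E k = 0)
    (α β : ℕ → K)
    (hα : PowerSeries.mk (fun n => if n = 0 then (0 : K) else E n / qFact q (n - 1)) =
      PowerSeries.mk (fun n => α n / qFact q n) *
        PowerSeries.mk (fun n => E n * q ^ n / qFact q n))
    (hβ : PowerSeries.mk (fun n => E n / qFact q n) =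
      PowerSeries.mk (fun n => β n / qFact q n) *
        PowerSeries.mk (fun n => E n * q ^ n / qFact q n)) :
    α 0 = 0 ∧
    (∀ n : ℕ, 1 ≤ n →
      α n = -(qInt q n / 2) * ∑ j ∈ Finset.range n, qChoose q (n - 1) j * E j) ∧
    α 1 = -(1 / 2) ∧
    (∀ n : ℕ, 2 ≤ n → α n = (qInt q n / 2) * E (n - 1)) ∧
    β 0 = 1 ∧
    (∀ n : ℕ, 1 ≤ n → β n = -(q - 1) * α n) ∧
    β 1 = (q - 1) / 2 ∧
    (∀ n : ℕ, 2 ≤ n → β n = -((q - 1) * qInt q n / 2) * E (n - 1)) := by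
  obtain ⟨hα0, hαsucc, hβ0, hβsucc⟩ := PowerSeries.qEuler_coeff_alpha_beta two_ne_zero hq hE0 hE
    (by rw [PowerSeries.qTheta_qEGF hq, PowerSeries.X_mul_qEGF_succ, PowerSeries.rescale_qEGF]
        exact hα)
    (by rw [PowerSeries.rescale_qEGF]; exact hβ)
  have hαn : ∀ n : ℕ, 1 ≤ n →
      α n = -(qInt q n / 2) * ∑ j ∈ Finset.range n, qChoose q (n - 1) j * E j := by
    intro n hn
    obtain ⟨m, rfl⟩ := Nat.exists_eq_add_of_le' hn
    simpa using hαsucc m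
  have hα1 : α 1 = -(1 / 2) := by simpa [qInt, qChoose, qFact, hE0] using hαsucc 0
  have hα2 : ∀ n : ℕ, 2 ≤ n → α n = (qInt q n / 2) * E (n - 1) := by
    intro n hn
    obtain ⟨m, rfl⟩ := Nat.exists_eq_add_of_le' hn
    rw [show m + 2 - 1 = m + 1 by omega, hαsucc (m + 1)]
    linear_combination (-(qInt q (m + 2) / 2)) * hE (m + 1) (by omega)
  have hβn : ∀ n : ℕ, 1 ≤ n → β n = -(q - 1) * α n := by
    intro n hn
    obtain ⟨m, rfl⟩ := Nat.exists_eq_add_of_le' hn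
    rw [hβsucc m]
    ring
  refine ⟨hα0, hαn, hα1, hα2, hβ0, hβn, ?_, fun n hn => ?_⟩
  · rw [hβn 1 le_rfl, hα1]
    ring
  · rw [hβn n (by omega), hα2 n hn]
    ring

/-- `q`-Euler `α`, `β` lemma. -/
theorem qEuler_alpha_beta
    {K : Type*} [Field K] [CharZero K] (q : K) (hq0 : q ≠ 0) (hq1 : q ≠ 1)
    (hq : ∀ n : ℕ, 1 ≤ n → qInt q n ≠ 0)
    (E : ℕ → K) (hE0 : E 0 = 1)
    (hE : ∀ n : ℕ, 1 ≤ n → E n + ∑ k ∈ Finset.range (n + 1), qChoose q n k * E k = 0)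
    (α β : ℕ → K)
    (hα : PowerSeries.mk (fun n => if n = 0 then (0 : K) else E n / qFact q (n - 1)) =
      PowerSeries.mk (fun n => α n / qFact q n) *
        PowerSeries.mk (fun n => E n * q ^ n / qFact q n))
    (hβ : PowerSeries.mk (fun n => E n / qFact q n) =
      PowerSeries.mk (fun n => β n / qFact q n) *
        PowerSeries.mk (fun n => E n * q ^ n / qFact q n)) :
    α 0 = 0 ∧
    (∀ n : ℕ, 1 ≤ n →
      α n = -(qInt q n / 2) * ∑ j ∈ Finset.range n, qChoose q (n - 1) j * E j) ∧
    α 1 = -(1 / 2) ∧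
    (∀ n : ℕ, 2 ≤ n → α n = (qInt q n / 2) * E (n - 1)) ∧
    β 0 = 1 ∧
    (∀ n : ℕ, 1 ≤ n → β n = -(q - 1) * α n) ∧
    β 1 = (q - 1) / 2 ∧
    (∀ n : ℕ, 2 ≤ n → β n = -((q - 1) * qInt q n / 2) * E (n - 1)) :=
  qEuler_alpha_beta_general q hq E hE0 hE α β hα hβ
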